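/- arXiv:2405.03179 — 2 statements merged into one kernel-verified Lean document; each statement's English description precedes it below -/
import Mathlib

section
/- For every nonzero homogeneous Laurent polynomial p ∈ 𝕃_{j−1}^hom[x_j,y_j] (1 ≤ j ≤ n), either ∂p = 0 or ∂p is homogeneous with pdeg(∂p) = pdeg(p); that is, the derivation ∂ preserves the poly-degree. -/
open scoped BigOperators

noncomputable section

/-- The coefficient ring `R = ℤ[R₁,…,Rₙ]`. -/
abbrev Rring (n : ℕ) : Type := MvPolynomial (Fin n) ℤ

/-- The ring `𝕃ₙ` of Laurent polynomials in `x₁,y₁,…,xₙ,yₙ` over `R`,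
encoded as the monoid algebra of `ℤⁿ × ℤⁿ` (the exponents `(k,l)`). -/
abbrev Lring (n : ℕ) : Type :=
  AddMonoidAlgebra (Rring n) ((Fin n → ℤ) × (Fin n → ℤ))

namespace Panazzolo

/-- `Δⱼ = R₁⋯Rⱼ` (here `j` is 1-indexed: `Dl n j = ∏_{i<j} X i`). -/
def Dl (n j : ℕ) : Rring n :=
  ∏ i ∈ Finset.univ.filter (fun i : Fin n => (i : ℕ) < j), MvPolynomial.X i

/-- Exponent of `P_{j-1} = x₁⋯x_{j-1}/(y₁⋯y_{j-1})` (with `j` 0-indexed). -/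
def Pexp (n : ℕ) (j : Fin n) : (Fin n → ℤ) × (Fin n → ℤ) :=
  (fun i => if i < j then 1 else 0, fun i => if i < j then -1 else 0)

/-- The derivation `∂` on `𝕃ₙ`, determined by
`∂xⱼ = ∂yⱼ = Δⱼ xⱼ (x₁⋯x_{j-1})/(y₁⋯y_{j-1})`. -/
def der (n : ℕ) (p : Lring n) : Lring n :=
  p.coeff.sum fun kl c => ∑ j : Fin n,
    (AddMonoidAlgebra.single (kl + Pexp n j) ((kl.1 j) • (Dl n ((j : ℕ) + 1) * c)) +
     AddMonoidAlgebra.single (kl + Pexp n j + (Pi.single j 1, Pi.single j (-1)))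
       ((kl.2 j) • (Dl n ((j : ℕ) + 1) * c)))

/-- The coefficient `q` of `xᵢ^α yᵢ^β` in `p`, viewed as a polynomial in `(xᵢ,yᵢ)`
(the variables `xᵢ,yᵢ` are erased from the result). -/
def coeffAt (n : ℕ) (i : Fin n) (α β : ℤ) (p : Lring n) : Lring n :=
  ∑ kl ∈ p.coeff.support.filter (fun kl => kl.1 i = α ∧ kl.2 i = β),
    AddMonoidAlgebra.single (Function.update kl.1 i 0, Function.update kl.2 i 0) (p.coeff kl)

/-- `k`-regularity of a Laurent polynomial (the paper's `𝕃ₖ^reg`), defined inductively: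
`0`-regular means a nonzero element of the coefficient ring `R`; `p` is `(k+1)`-regular if it
is homogeneous, involves only the variables `x₁,y₁,…,x_{k+1},y_{k+1}`, is a genuine polynomial
in `(x_{k+1},y_{k+1})` of degree `m`, and the coefficient `q₀` of `x_{k+1}^0 y_{k+1}^m`
is `k`-regular. -/
def IsReg (n : ℕ) : ℕ → Lring n → Prop
  | 0, p => p ≠ 0 ∧ ∀ kl ∈ p.coeff.support, kl = 0
  | (k+1), p =>
      (∀ kl ∈ p.coeff.support, ∀ i : Fin n, k + 1 ≤ (i : ℕ) → kl.1 i = 0 ∧ kl.2 i = 0) ∧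
      (∃ d : Fin n → ℤ, ∀ kl ∈ p.coeff.support, kl.1 + kl.2 = d) ∧
      (∃ m : ℕ, (∀ kl ∈ p.coeff.support, ∀ i : Fin n, (i : ℕ) = k →
          0 ≤ kl.1 i ∧ 0 ≤ kl.2 i ∧ kl.1 i + kl.2 i = (m : ℤ)) ∧
        ∀ i : Fin n, (i : ℕ) = k → IsReg n k (coeffAt n i 0 (m : ℤ) p))

-- The exponent of the regularization monomial `reg(p)` (computed through the first `k`
-- variable pairs, from the top one down).
open Classical in
def regExp (n : ℕ) : ℕ → Lring n → (Fin n → ℤ) × (Fin n → ℤ)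
  | 0, _ => 0
  | (k+1), p =>
      if h : k < n ∧ p ≠ 0 then
        have hs : p.coeff.support.Nonempty := Finsupp.support_nonempty_iff.mpr
          (fun h0 => h.2 (AddMonoidAlgebra.coeff_eq_zero.mp h0))
        let i : Fin n := ⟨k, h.1⟩
        let n0 : ℤ := (p.coeff.support.image fun kl => kl.1 i).min' (hs.image _)
        let l0 : ℤ := (p.coeff.support.image fun kl => kl.2 i).min' (hs.image _)
        let n1 : ℤ := (p.coeff.support.image fun kl => kl.2 i).max' (hs.image _)
        (Pi.single i n0, Pi.single i l0) + regExp n k (coeffAt n i n0 n1 p)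
      else 0

/-- Division by the regularization monomial: `q ↦ q/reg(q)`. -/
def divreg (n : ℕ) (q : Lring n) : Lring n :=
  AddMonoidAlgebra.single (-(regExp n n q)) 1 * q

/-- The derivation-division sequence `p⁽⁰⁾ = p`, `p⁽ᵏ⁺¹⁾ = ∂p⁽ᵏ⁾ / reg(∂p⁽ᵏ⁾)`. -/
def seqDD (n : ℕ) (p : Lring n) : ℕ → Lring n
  | 0 => p
  | (k+1) => divreg n (der n (seqDD n p k))

/-- `p` belongs to the coefficient ring `R ⊆ 𝕃ₙ`. -/
def InR (n : ℕ) (p : Lring n) : Prop := ∀ kl ∈ p.coeff.support, kl = 0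

/-- The reverse lexicographic (strict) order on `ℕⁿ`. -/
def rlexLt (n : ℕ) (d d' : Fin n → ℕ) : Prop :=
  ∃ i : Fin n, (∀ j : Fin n, i < j → d j = d' j) ∧ d i < d' i

/-- The monomial `yⱼ^e` (with `j` 1-indexed). -/
def ymon (n : ℕ) (j e : ℕ) : Lring n :=
  AddMonoidAlgebra.single (0, fun i : Fin n => if (i : ℕ) + 1 = j then (e : ℤ) else 0) 1

/-- The nested expression `Q_j + (⋯(Q₂ + (Q₁ + α y₁^{m₁}) y₂^{m₂})⋯) y_j^{m_j}`. -/
def nestedP (n : ℕ) (α : Rring n) (Q : ℕ → Lring n) (m : ℕ → ℕ) : ℕ → Lring n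
  | 0 => AddMonoidAlgebra.single 0 α
  | (j+1) => Q (j+1) + nestedP n α Q m j * ymon n (j+1) (m (j+1))

/-- Auxiliary recursion for the function `H_k` of Section 6. -/
def Haux {k : ℕ} (f : (Fin (k+1) → ℕ) → ℕ) : (Fin (k+1) → ℕ) → ℕ → ℕ
  | μ, 0 => f μ
  | μ, (t+1) => Haux f (Function.update μ (Fin.last k) (μ (Fin.last k) + f μ)) t

/-- The functions `H_k : ℕᵏ → ℕ` of Section 6. -/
def Hfun : (k : ℕ) → (Fin k → ℕ) → ℕ
  | 0, _ => 0
  | 1, m => m 0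
  | (k+2), m => Haux (Hfun (k+1)) (Fin.init m) (m (Fin.last (k+1)))

/-- The regular Laurent polynomial
`p = Δₙ ∑_{j=1}^n (Δⱼ−Δ_{j−1}) (∏_{i=1}^{j−1} xᵢ)(∏_{i=j}^{n−1} yᵢ)`
associated with equation (1) (it lives in the variables `x₁,…,x_{n−1},y₁,…,y_{n−1}`). -/
def pSpec (n : ℕ) : Lring n :=
  ∑ j ∈ Finset.Icc 1 n,
    AddMonoidAlgebra.single
      ((fun i : Fin n => if (i : ℕ) + 1 ≤ j - 1 then 1 else 0),
       (fun i : Fin n => if j ≤ (i : ℕ) + 1 ∧ (i : ℕ) + 1 ≤ n - 1 then (1 : ℤ) else 0))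
      (Dl n n * (Dl n j - Dl n (j - 1)))

/-- `DD(n)`: the number of steps of the derivation-division algorithm applied to `pSpec n`. -/
def DDnum (n : ℕ) : ℕ := sInf {m : ℕ | InR n (seqDD n (pSpec n) m)}

/-- The functions `gᵢ` : `g₀(x) = x`, `g_{i+1}(x) = a_{i+1} + gᵢ(x)^{r_{i+1}}` (real powers),
with 1-indexed parameter families `a r : ℕ → ℝ`. -/
def gfun (a r : ℕ → ℝ) : ℕ → ℝ → ℝ
  | 0 => fun x => x
  | (i+1) => fun x => a (i+1) + gfun a r i x ^ r (i+1)

/-- The functions `fᵢ` : `f_{i+1}(x) = gᵢ(x)^{r_{i+1}}`. -/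
def ffun (a r : ℕ → ℝ) : ℕ → ℝ → ℝ
  | 0 => fun _ => 1
  | (i+1) => fun x => gfun a r i x ^ r (i+1)

/-- The domain `I(a,r)`: the set of `x` where `g₀(x),…,gₙ(x)` are all strictly positive. -/
def Iset (n : ℕ) (a r : ℕ → ℝ) : Set ℝ := {x : ℝ | ∀ i ≤ n, 0 < gfun a r i x}

/-- The solution set `Sₙ(b,a,r) = {x ∈ I(a,r) : gₙ(x) = b x}`. -/
def Sset (n : ℕ) (b : ℝ) (a r : ℕ → ℝ) : Set ℝ :=
  {x ∈ Iset n a r | gfun a r n x = b * x}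

/-- The evaluation morphism `Ψ : 𝕃ₙ → C^ω(I(a,r))`, `Rᵢ ↦ rᵢ`, `xᵢ ↦ fᵢ`, `yᵢ ↦ gᵢ`
(defined pointwise). -/
def Psi (n : ℕ) (a r : ℕ → ℝ) (p : Lring n) : ℝ → ℝ := fun x =>
  p.coeff.sum fun kl c =>
    (MvPolynomial.aeval (fun i : Fin n => r ((i : ℕ) + 1)) c : ℝ) *
      ∏ i : Fin n, (ffun a r ((i : ℕ) + 1) x ^ kl.1 i * gfun a r ((i : ℕ) + 1) x ^ kl.2 i)

/-- `δⱼ = r₁⋯rⱼ` (with `δ₀ = 1`). -/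
def delta (r : ℕ → ℝ) (j : ℕ) : ℝ := ∏ i ∈ Finset.Icc 1 j, r i

/-- Extension of a `Fin n`-indexed parameter vector to a 1-indexed family `ℕ → ℝ`. -/
def extF (n : ℕ) (v : Fin n → ℝ) : ℕ → ℝ :=
  fun i => if h : 1 ≤ i ∧ i ≤ n then v ⟨i - 1, by omega⟩ else 0

end Panazzolo


/-- For every nonzero `p ∈ 𝕃_{j-1}^hom[x_j,y_j]` of poly-degree `d`,
either `∂p = 0` or `∂p` is homogeneous with `pdeg(∂p) = pdeg(p) = d`. -/
theorem statement2 (n j : ℕ) (hj : 1 ≤ j) (hjn : j ≤ n) (p : Lring n) (hp : p ≠ 0)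
    (d : Fin n → ℤ)
    (hd : ∀ kl ∈ p.coeff.support, kl.1 + kl.2 = d)
    (hvars : ∀ kl ∈ p.coeff.support, ∀ i : Fin n, j ≤ (i : ℕ) → kl.1 i = 0 ∧ kl.2 i = 0)
    (hnn : ∀ kl ∈ p.coeff.support, ∀ i : Fin n, (i : ℕ) + 1 = j → 0 ≤ kl.1 i ∧ 0 ≤ kl.2 i) :
    Panazzolo.der n p = 0 ∨
      (Panazzolo.der n p ≠ 0 ∧ ∀ kl ∈ (Panazzolo.der n p).coeff.support, kl.1 + kl.2 = d) := by
  classical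
  by_cases h0 : Panazzolo.der n p = 0
  · exact Or.inl h0
  · refine Or.inr ⟨h0, ?_⟩
    intro kl hkl
    unfold Panazzolo.der at hkl
    rw [Finsupp.sum, AddMonoidAlgebra.coeff_sum] at hkl
    have h1 := Finsupp.support_finset_sum hkl
    rw [Finset.mem_biUnion] at h1
    obtain ⟨kl0, hkl0, hmem⟩ := h1
    have hpd : kl0.1 + kl0.2 = d := hd kl0 hkl0
    rw [AddMonoidAlgebra.coeff_sum] at hmem
    have h2 := Finsupp.support_finset_sum hmem
    rw [Finset.mem_biUnion] at h2
    obtain ⟨i, -, hmem2⟩ := h2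
    rw [AddMonoidAlgebra.coeff_add, AddMonoidAlgebra.coeff_single,
      AddMonoidAlgebra.coeff_single] at hmem2
    have h3 := Finsupp.support_add hmem2
    have hPexp : (Panazzolo.Pexp n i).1 + (Panazzolo.Pexp n i).2 = 0 := by
      funext t
      simp only [Panazzolo.Pexp, Pi.add_apply, Pi.zero_apply]
      split <;> ring
    have hsing : (Pi.single i (1:ℤ) : Fin n → ℤ) + Pi.single i (-1) = 0 := by
      funext t
      by_cases h : t = i
      · subst h; simp
      · simp [Pi.single_eq_of_ne h]
    rcases Finset.mem_union.mp h3 with h4 | h4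
    · have := Finsupp.support_single_subset h4
      rw [Finset.mem_singleton] at this
      subst this
      show (kl0.1 + _) + (kl0.2 + _) = d
      rw [add_add_add_comm, hPexp, add_zero, hpd]
    · have := Finsupp.support_single_subset h4
      rw [Finset.mem_singleton] at this
      subst this
      show ((kl0.1 + _) + _) + ((kl0.2 + _) + _) = d
      rw [add_add_add_comm, add_add_add_comm kl0.1, hPexp, add_zero, hpd, hsing, add_zero]
end
end

section
/- Fix (a,r) ∈ ℝ^{2n} with I(a,r) nonempty. The derivation x·d/dx maps the ring G_n = ℤ[r_1,…,r_n][f_1^{±1}, g_1^{±1}, …, f_n^{±1}, g_n^{±1}] of analytic functions on I(a,r) into itself; explicitly, x·(d/dx) g_j = x·(d/dx) f_j = (r_1⋯r_j)·f_j·(f_1⋯f_{j−1})/(g_1⋯g_{j−1}) for each j. Moreover, the ring homomorphism Ψ : 𝕃_n → C^ω(I(a,r)) determined by Ψ(R_i) = r_i (constant function), Ψ(x_i) = f_i and Ψ(y_i) = g_i satisfies Ψ ∘ ∂ = (x·d/dx) ∘ Ψ. -/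
open scoped BigOperators

noncomputable section

namespace PanAux
open Panazzolo Finset

lemma prod_filter_lt {M : Type*} [CommMonoid M] (n j : ℕ) (hj : j ≤ n) (f : ℕ → M) :
    ∏ i ∈ Finset.univ.filter (fun i : Fin n => (i : ℕ) < j), f ((i : ℕ) + 1)
      = ∏ i ∈ Finset.Icc 1 j, f i := by
  apply Finset.prod_bij' (fun (i : Fin n) _ => (i : ℕ) + 1)
    (fun m hm => (⟨m - 1, by simp [Finset.mem_Icc] at hm; omega⟩ : Fin n))
  all_goals intro a ha
  all_goals first
    | rfl
    | (simp [Finset.mem_Icc] at ha ⊢; omega)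

lemma gpos {n : ℕ} {a r : ℕ → ℝ} {x : ℝ} (hx : x ∈ Iset n a r) :
    ∀ i ≤ n, 0 < gfun a r i x := hx

lemma fpos {n : ℕ} {a r : ℕ → ℝ} {x : ℝ} (hx : x ∈ Iset n a r) :
    ∀ i ≤ n, 0 < ffun a r i x := by
  intro i hi
  cases i with
  | zero => norm_num [ffun]
  | succ k => exact Real.rpow_pos_of_pos (gpos hx k (by omega)) _

lemma keyD {n : ℕ} {a r : ℕ → ℝ} {x : ℝ} (hx : x ∈ Iset n a r) :
    ∀ j ≤ n, ∃ d, HasDerivAt (gfun a r j) d x ∧ (1 ≤ j → HasDerivAt (ffun a r j) d x) ∧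
      x * d = (if j = 0 then x else
        (∏ i ∈ Finset.Icc 1 j, r i) * ffun a r j x *
          ∏ i ∈ Finset.Icc 1 (j - 1), (ffun a r i x / gfun a r i x)) := by
  intro j hj
  induction j with
  | zero =>
    exact ⟨1, hasDerivAt_id x, by omega, by simp [gfun]⟩
  | succ k ih =>
    obtain ⟨d, hg, _, hd⟩ := ih (by omega)
    have hgk : 0 < gfun a r k x := gpos hx k (by omega)
    have hf1 : HasDerivAt (ffun a r (k + 1)) (d * r (k + 1) * gfun a r k x ^ (r (k + 1) - 1)) x := by
      have := hg.rpow_const (p := r (k + 1)) (Or.inl hgk.ne')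
      exact this
    refine ⟨d * r (k + 1) * gfun a r k x ^ (r (k + 1) - 1), ?_, fun _ => hf1, ?_⟩
    · have : HasDerivAt (fun y => a (k + 1) + gfun a r k y ^ r (k + 1))
          (d * r (k + 1) * gfun a r k x ^ (r (k + 1) - 1)) x := (hf1).const_add _
      exact this
    · rw [if_neg (by omega)]
      have hxd : x * (d * r (k+1) * gfun a r k x ^ (r (k+1) - 1))
          = (x * d) * r (k+1) * gfun a r k x ^ (r (k+1) - 1) := by ring
      rw [hxd, hd]
      rcases Nat.eq_zero_or_pos k with hk | hk
      · subst hk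
        simp only [if_pos rfl]
        have : gfun a r 0 x = x := rfl
        rw [this]
        have hx0 : (0:ℝ) < x := gpos hx 0 (by omega)
        simp only [Nat.sub_self, Finset.Icc_eq_empty (by norm_num : ¬(1:ℕ) ≤ 1-1),
          Finset.prod_empty, Finset.Icc_self, Finset.prod_singleton]
        have e3 : ffun a r 1 x = x ^ r 1 := rfl
        rw [e3, Real.rpow_sub hx0, Real.rpow_one]
        field_simp
        rw [if_pos trivial]
        ring
      · rw [if_neg (by omega)]
        have hgk0 := hgk.ne'
        have e1 : ∏ i ∈ Finset.Icc 1 (k+1), r i = (∏ i ∈ Finset.Icc 1 k, r i) * r (k+1) :=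
          Finset.prod_Icc_succ_top (by omega) _
        have e2 : ∏ i ∈ Finset.Icc 1 (k+1-1), (ffun a r i x / gfun a r i x)
            = (∏ i ∈ Finset.Icc 1 (k-1), (ffun a r i x / gfun a r i x)) *
              (ffun a r k x / gfun a r k x) := by
          rw [show k+1-1 = (k-1)+1 by omega, Finset.prod_Icc_succ_top (by omega),
            show k-1+1 = k by omega]
        have e3 : ffun a r (k+1) x = gfun a r k x ^ r (k+1) := rfl
        have e4 : gfun a r k x ^ (r (k+1) - 1) = gfun a r k x ^ r (k+1) / gfun a r k x := by
          rw [Real.rpow_sub hgk, Real.rpow_one]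
        rw [e1, e2, e3, e4]
        field_simp

def Cv (n : ℕ) (r : ℕ → ℝ) (c : Rring n) : ℝ :=
  MvPolynomial.aeval (fun i : Fin n => r ((i : ℕ) + 1)) c

def Mv (n : ℕ) (a r : ℕ → ℝ) (x : ℝ) (kl : (Fin n → ℤ) × (Fin n → ℤ)) : ℝ :=
  ∏ i : Fin n, (ffun a r ((i : ℕ) + 1) x ^ kl.1 i * gfun a r ((i : ℕ) + 1) x ^ kl.2 i)

lemma Psi_apply (n : ℕ) (a r : ℕ → ℝ) (x : ℝ) (p : Lring n) :
    Psi n a r p x = p.coeff.sum fun kl c => Cv n r c * Mv n a r x kl := rfl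

lemma Psi_single (n : ℕ) (a r : ℕ → ℝ) (x : ℝ) (kl : (Fin n → ℤ) × (Fin n → ℤ))
    (c : Rring n) :
    Psi n a r (AddMonoidAlgebra.single kl c) x = Cv n r c * Mv n a r x kl :=
  Finsupp.sum_single_index (by simp [Cv])

/-- `Psi` at a point, as an additive monoid hom. -/
def PsiHom (n : ℕ) (a r : ℕ → ℝ) (x : ℝ) : Lring n →+ ℝ where
  toFun p := Psi n a r p x
  map_zero' := by simp [Psi_apply]
  map_add' p q := by
    show Psi n a r (p + q) x = Psi n a r p x + Psi n a r q x
    simp only [Psi_apply]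
    exact Finsupp.sum_add_index' (fun kl => by simp [Cv])
      (fun kl c c' => by simp [Cv, map_add, add_mul])

lemma Mv_zero (n : ℕ) (a r : ℕ → ℝ) (x : ℝ) : Mv n a r x 0 = 1 := by simp [Mv]

lemma fne {n : ℕ} {a r : ℕ → ℝ} {x : ℝ} (hx : x ∈ Iset n a r) (i : Fin n) :
    ffun a r ((i : ℕ) + 1) x ≠ 0 := (fpos hx _ (by omega)).ne'

lemma gne {n : ℕ} {a r : ℕ → ℝ} {x : ℝ} (hx : x ∈ Iset n a r) (i : Fin n) :
    gfun a r ((i : ℕ) + 1) x ≠ 0 := (gpos hx _ (by omega)).ne'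

lemma Mv_add {n : ℕ} {a r : ℕ → ℝ} {x : ℝ} (hx : x ∈ Iset n a r)
    (kl kl' : (Fin n → ℤ) × (Fin n → ℤ)) :
    Mv n a r x (kl + kl') = Mv n a r x kl * Mv n a r x kl' := by
  simp only [Mv, ← Finset.prod_mul_distrib, Prod.fst_add, Prod.snd_add, Pi.add_apply]
  refine Finset.prod_congr rfl fun i _ => ?_
  rw [zpow_add₀ (fne hx i), zpow_add₀ (gne hx i)]
  ring

/-- `Psi` at a point of `Iset`, as a ring hom. -/
def PsiRingHom (n : ℕ) (a r : ℕ → ℝ) {x : ℝ} (hx : x ∈ Iset n a r) : Lring n →+* ℝ :=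
  AddMonoidAlgebra.liftNCRingHom
    ((MvPolynomial.aeval (fun i : Fin n => r ((i : ℕ) + 1))).toRingHom)
    { toFun := fun kl => Mv n a r x (Multiplicative.toAdd kl)
      map_one' := Mv_zero n a r x
      map_mul' := fun kl kl' => Mv_add hx kl kl' }
    (fun _ _ => Commute.all _ _)

lemma Psi_eq_ringHom {n : ℕ} (a r : ℕ → ℝ) {x : ℝ} (hx : x ∈ Iset n a r) (p : Lring n) :
    Psi n a r p x = PsiRingHom n a r hx p := by
  induction p using AddMonoidAlgebra.induction_linear with
  | zero => simp [Psi_apply]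
  | add p q hp hq =>
      rw [map_add, ← hp, ← hq]
      exact (PsiHom n a r x).map_add p q
  | single kl c =>
      rw [Psi_single]
      show _ = AddMonoidAlgebra.liftNC (R := ℝ)
        ((MvPolynomial.aeval (fun i : Fin n => r ((i : ℕ) + 1))).toRingHom : Rring n →+* ℝ).toAddMonoidHom
        (fun kl => Mv n a r x (Multiplicative.toAdd kl)) (AddMonoidAlgebra.single kl c)
      rw [AddMonoidAlgebra.liftNC_single]
      rfl

def Pval (n : ℕ) (a r : ℕ → ℝ) (x : ℝ) (j : ℕ) : ℝ :=
  ∏ i ∈ Finset.Icc 1 j, (ffun a r i x / gfun a r i x)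

lemma Cv_zsmul (n : ℕ) (r : ℕ → ℝ) (m : ℤ) (q : Rring n) :
    Cv n r (m • q) = (m : ℝ) * Cv n r q := by
  simp [Cv, zsmul_eq_mul]

lemma Cv_mul (n : ℕ) (r : ℕ → ℝ) (p q : Rring n) :
    Cv n r (p * q) = Cv n r p * Cv n r q := by simp [Cv]

lemma Cv_Dl (n : ℕ) (r : ℕ → ℝ) {j : ℕ} (hj : j ≤ n) :
    Cv n r (Dl n j) = delta r j := by
  simp only [Cv, Dl, map_prod, MvPolynomial.aeval_X, delta]
  exact prod_filter_lt n j hj r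

lemma Mv_Pexp {n : ℕ} {a r : ℕ → ℝ} {x : ℝ} (hx : x ∈ Iset n a r) (j : Fin n) :
    Mv n a r x (Pexp n j) = Pval n a r x (j : ℕ) := by
  have h1 : ∀ i : Fin n,
      (ffun a r ((i : ℕ) + 1) x ^ (Pexp n j).1 i * gfun a r ((i : ℕ) + 1) x ^ (Pexp n j).2 i)
      = if (i : ℕ) < (j : ℕ) then
          ffun a r ((i : ℕ) + 1) x / gfun a r ((i : ℕ) + 1) x else 1 := by
    intro i
    by_cases h : i < j
    · simp [Pexp, h, Fin.lt_def.mp h, zpow_neg, div_eq_mul_inv]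
    · have h' : ¬ ((i : ℕ) < (j : ℕ)) := fun hc => h (Fin.lt_def.mpr hc)
      simp [Pexp, h, h']
  rw [Mv, Finset.prod_congr rfl (fun i _ => h1 i), ← Finset.prod_filter]
  exact prod_filter_lt n (j : ℕ) (by omega) (fun i => ffun a r i x / gfun a r i x)

lemma Mv_esingle {n : ℕ} {a r : ℕ → ℝ} {x : ℝ} (hx : x ∈ Iset n a r) (j : Fin n) :
    Mv n a r x (Pi.single j 1, Pi.single j (-1))
      = ffun a r ((j : ℕ) + 1) x / gfun a r ((j : ℕ) + 1) x := by
  rw [Mv]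
  rw [Fintype.prod_eq_single j (fun i hi => by
    simp [Pi.single_eq_of_ne hi])]
  simp [zpow_neg, div_eq_mul_inv]

lemma der_single (n : ℕ) (kl : (Fin n → ℤ) × (Fin n → ℤ)) (c : Rring n) :
    der n (AddMonoidAlgebra.single kl c) = ∑ j : Fin n,
      (AddMonoidAlgebra.single (kl + Pexp n j) ((kl.1 j) • (Dl n ((j : ℕ) + 1) * c)) +
       AddMonoidAlgebra.single (kl + Pexp n j + (Pi.single j 1, Pi.single j (-1)))
         ((kl.2 j) • (Dl n ((j : ℕ) + 1) * c))) := by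
  unfold der
  exact Finsupp.sum_single_index (by simp)

lemma Psi_der_single {n : ℕ} {a r : ℕ → ℝ} {x : ℝ} (hx : x ∈ Iset n a r)
    (kl : (Fin n → ℤ) × (Fin n → ℤ)) (c : Rring n) :
    Psi n a r (der n (AddMonoidAlgebra.single kl c)) x = ∑ j : Fin n,
      ((kl.1 j : ℝ) * (delta r ((j : ℕ) + 1) * Cv n r c) * (Mv n a r x kl * Pval n a r x j) +
       (kl.2 j : ℝ) * (delta r ((j : ℕ) + 1) * Cv n r c) *
         (Mv n a r x kl * Pval n a r x j *
           (ffun a r ((j : ℕ) + 1) x / gfun a r ((j : ℕ) + 1) x))) := by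
  rw [der_single]
  rw [show Psi n a r (∑ j : Fin n, _) x = PsiHom n a r x (∑ j : Fin n,
      (AddMonoidAlgebra.single (kl + Pexp n j) ((kl.1 j) • (Dl n ((j : ℕ) + 1) * c)) +
       AddMonoidAlgebra.single (kl + Pexp n j + (Pi.single j 1, Pi.single j (-1)))
         ((kl.2 j) • (Dl n ((j : ℕ) + 1) * c)))) from rfl]
  rw [map_sum]
  refine Finset.sum_congr rfl fun j _ => ?_
  rw [map_add]
  show Psi n a r _ x + Psi n a r _ x = _
  rw [Psi_single, Psi_single, Cv_zsmul, Cv_zsmul, Cv_mul, Cv_Dl n r (by omega),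
    Mv_add hx, Mv_add hx, Mv_add hx, Mv_Pexp hx, Mv_esingle hx]

lemma monD {n : ℕ} {a r : ℕ → ℝ} {x : ℝ} (hx : x ∈ Iset n a r)
    (kl : (Fin n → ℤ) × (Fin n → ℤ)) (c : Rring n) :
    ∃ D, HasDerivAt (fun y => Cv n r c *
        ∏ i : Fin n, (ffun a r ((i : ℕ) + 1) y ^ kl.1 i * gfun a r ((i : ℕ) + 1) y ^ kl.2 i))
        D x ∧
      x * D = Psi n a r (der n (AddMonoidAlgebra.single kl c)) x := by
  have hx0 : (0 : ℝ) < x := gpos hx 0 (by omega)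
  have H : ∀ i : Fin n, ∃ d, HasDerivAt (gfun a r ((i : ℕ) + 1)) d x ∧
      HasDerivAt (ffun a r ((i : ℕ) + 1)) d x ∧
      x * d = delta r ((i : ℕ) + 1) * ffun a r ((i : ℕ) + 1) x * Pval n a r x i := by
    intro i
    obtain ⟨d, h1, h2, h3⟩ := keyD hx ((i : ℕ) + 1) (by omega)
    exact ⟨d, h1, h2 (by omega), by rw [h3, if_neg (by omega)]; simp [delta, Pval]⟩
  choose d hgd hfd hxd using H
  have hfac : ∀ i : Fin n, HasDerivAt
      (fun y => ffun a r ((i : ℕ) + 1) y ^ kl.1 i * gfun a r ((i : ℕ) + 1) y ^ kl.2 i)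
      (((kl.1 i : ℝ) * ffun a r ((i : ℕ) + 1) x ^ (kl.1 i - 1) * d i) *
          gfun a r ((i : ℕ) + 1) x ^ kl.2 i
        + ffun a r ((i : ℕ) + 1) x ^ kl.1 i *
          ((kl.2 i : ℝ) * gfun a r ((i : ℕ) + 1) x ^ (kl.2 i - 1) * d i)) x := by
    intro i
    have h1 : HasDerivAt (fun y => ffun a r ((i : ℕ) + 1) y ^ kl.1 i)
        ((kl.1 i : ℝ) * ffun a r ((i : ℕ) + 1) x ^ (kl.1 i - 1) * d i) x :=
      (hasDerivAt_zpow (kl.1 i) _ (Or.inl (fne hx i))).comp x (hfd i)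
    have h2 : HasDerivAt (fun y => gfun a r ((i : ℕ) + 1) y ^ kl.2 i)
        ((kl.2 i : ℝ) * gfun a r ((i : ℕ) + 1) x ^ (kl.2 i - 1) * d i) x :=
      (hasDerivAt_zpow (kl.2 i) _ (Or.inl (gne hx i))).comp x (hgd i)
    exact h1.mul h2
  have hprod := HasDerivAt.fun_finsetProd (u := Finset.univ) (fun i _ => hfac i)
  have hD := hprod.const_mul (Cv n r c)
  refine ⟨_, hD, ?_⟩
  rw [Psi_der_single hx]
  rw [show ∀ S : ℝ, x * (Cv n r c * S) = Cv n r c * x * S from fun S => by ring,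
    Finset.mul_sum]
  refine Finset.sum_congr rfl fun i _ => ?_
  rw [smul_eq_mul]
  have hMv : Mv n a r x kl
      = (ffun a r ((i : ℕ) + 1) x ^ kl.1 i * gfun a r ((i : ℕ) + 1) x ^ kl.2 i) *
        ∏ j ∈ Finset.univ.erase i,
          (ffun a r ((j : ℕ) + 1) x ^ kl.1 j * gfun a r ((j : ℕ) + 1) x ^ kl.2 j) :=
    (Finset.mul_prod_erase _ _ (Finset.mem_univ i)).symm
  have e5 : ffun a r ((i : ℕ) + 1) x ^ (kl.1 i - 1)
      = ffun a r ((i : ℕ) + 1) x ^ kl.1 i / ffun a r ((i : ℕ) + 1) x := by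
    rw [zpow_sub_one₀ (fne hx i), div_eq_mul_inv]
  have e6 : gfun a r ((i : ℕ) + 1) x ^ (kl.2 i - 1)
      = gfun a r ((i : ℕ) + 1) x ^ kl.2 i / gfun a r ((i : ℕ) + 1) x := by
    rw [zpow_sub_one₀ (gne hx i), div_eq_mul_inv]
  have hdi : d i = delta r ((i : ℕ) + 1) * ffun a r ((i : ℕ) + 1) x * Pval n a r x i / x := by
    field_simp
    linarith [hxd i]
  rw [hMv, e5, e6, hdi]
  have hfne := fne hx i
  have hgne := gne hx i
  field_simp

lemma PsiD {n : ℕ} {a r : ℕ → ℝ} {x : ℝ} (hx : x ∈ Iset n a r) (p : Lring n) :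
    ∃ D, HasDerivAt (Psi n a r p) D x ∧ x * D = Psi n a r (der n p) x := by
  choose D hDa hDb using fun kl => monD hx kl (p.coeff kl)
  have hfun : Psi n a r p = fun y => ∑ kl ∈ p.coeff.support, Cv n r (p.coeff kl) *
      ∏ i : Fin n, (ffun a r ((i : ℕ) + 1) y ^ kl.1 i * gfun a r ((i : ℕ) + 1) y ^ kl.2 i) := by
    funext y
    rfl
  have hder : der n p = ∑ kl ∈ p.coeff.support, der n (AddMonoidAlgebra.single kl (p.coeff kl)) := by
    unfold der
    rw [Finsupp.sum]
    exact Finset.sum_congr rfl fun kl _ => (der_single n kl (p.coeff kl)).symm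
  refine ⟨∑ kl ∈ p.coeff.support, D kl, ?_, ?_⟩
  · rw [hfun]
    exact HasDerivAt.fun_sum (fun kl _ => hDa kl)
  · rw [Finset.mul_sum, hder]
    rw [show Psi n a r (∑ kl ∈ p.coeff.support, der n (AddMonoidAlgebra.single kl (p.coeff kl))) x
        = PsiHom n a r x (∑ kl ∈ p.coeff.support, der n (AddMonoidAlgebra.single kl (p.coeff kl))) from rfl,
      map_sum]
    exact Finset.sum_congr rfl fun kl _ => hDb kl

end PanAux

/-- The derivation `x·d/dx` maps the ring
`Gₙ = ℤ[r₁,…,rₙ][f₁^{±1},g₁^{±1},…,fₙ^{±1},gₙ^{±1}]` into itself, with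
`x·(d/dx)gⱼ = x·(d/dx)fⱼ = (r₁⋯rⱼ)·fⱼ·(f₁⋯f_{j-1})/(g₁⋯g_{j-1})`, and the evaluation
morphism `Ψ : 𝕃ₙ → C^ω(I(a,r))` (with `Ψ(Rᵢ) = rᵢ`, `Ψ(xᵢ) = fᵢ`, `Ψ(yᵢ) = gᵢ`) is a ring
homomorphism on `I(a,r)` satisfying `Ψ ∘ ∂ = (x·d/dx) ∘ Ψ`. -/
theorem statement9 (n : ℕ) (hn : 1 ≤ n) (a r : ℕ → ℝ)
    (hne : (Panazzolo.Iset n a r).Nonempty) :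
    (∀ j, 1 ≤ j → j ≤ n → ∀ x ∈ Panazzolo.Iset n a r,
      (x * deriv (Panazzolo.gfun a r j) x
          = (∏ i ∈ Finset.Icc 1 j, r i) * Panazzolo.ffun a r j x *
              ∏ i ∈ Finset.Icc 1 (j-1),
                (Panazzolo.ffun a r i x / Panazzolo.gfun a r i x)) ∧
      (x * deriv (Panazzolo.ffun a r j) x
          = (∏ i ∈ Finset.Icc 1 j, r i) * Panazzolo.ffun a r j x *
              ∏ i ∈ Finset.Icc 1 (j-1),
                (Panazzolo.ffun a r i x / Panazzolo.gfun a r i x))) ∧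
    (∀ i : Fin n, ∀ x : ℝ,
      Panazzolo.Psi n a r (AddMonoidAlgebra.single (Pi.single i 1, 0) 1) x
          = Panazzolo.ffun a r ((i : ℕ) + 1) x ∧
      Panazzolo.Psi n a r (AddMonoidAlgebra.single (0, Pi.single i 1) 1) x
          = Panazzolo.gfun a r ((i : ℕ) + 1) x ∧
      Panazzolo.Psi n a r (AddMonoidAlgebra.single 0 (MvPolynomial.X i)) x
          = r ((i : ℕ) + 1)) ∧
    (∀ p q : Lring n, ∀ x ∈ Panazzolo.Iset n a r,
      Panazzolo.Psi n a r (p + q) x = Panazzolo.Psi n a r p x + Panazzolo.Psi n a r q x ∧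
      Panazzolo.Psi n a r (p * q) x = Panazzolo.Psi n a r p x * Panazzolo.Psi n a r q x ∧
      Panazzolo.Psi n a r 1 x = 1) ∧
    (∀ p : Lring n, ∀ x ∈ Panazzolo.Iset n a r,
      Panazzolo.Psi n a r (Panazzolo.der n p) x = x * deriv (Panazzolo.Psi n a r p) x) := by
  refine ⟨?_, ?_, ?_, ?_⟩
  · intro j hj1 hjn x hx
    obtain ⟨d, hg, hf, hxd⟩ := PanAux.keyD hx j hjn
    rw [if_neg (by omega)] at hxd
    exact ⟨by rw [hg.deriv]; exact hxd, by rw [(hf hj1).deriv]; exact hxd⟩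
  · intro i x
    refine ⟨?_, ?_, ?_⟩
    · rw [PanAux.Psi_single]
      have h1 : PanAux.Cv n r 1 = 1 := map_one _
      have h2 : PanAux.Mv n a r x (Pi.single i 1, 0) = Panazzolo.ffun a r ((i : ℕ) + 1) x := by
        rw [PanAux.Mv, Fintype.prod_eq_single i (fun j hj => by
          simp [Pi.single_eq_of_ne hj])]
        simp
      rw [h1, h2, one_mul]
    · rw [PanAux.Psi_single]
      have h1 : PanAux.Cv n r 1 = 1 := map_one _
      have h2 : PanAux.Mv n a r x (0, Pi.single i 1) = Panazzolo.gfun a r ((i : ℕ) + 1) x := by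
        rw [PanAux.Mv, Fintype.prod_eq_single i (fun j hj => by
          simp [Pi.single_eq_of_ne hj])]
        simp
      rw [h1, h2, one_mul]
    · rw [PanAux.Psi_single]
      have h1 : PanAux.Cv n r (MvPolynomial.X i) = r ((i : ℕ) + 1) := by
        simp [PanAux.Cv]
      rw [h1, PanAux.Mv_zero, mul_one]
  · intro p q x hx
    refine ⟨(PanAux.PsiHom n a r x).map_add p q, ?_, ?_⟩
    · rw [PanAux.Psi_eq_ringHom a r hx, PanAux.Psi_eq_ringHom a r hx,
        PanAux.Psi_eq_ringHom a r hx, map_mul]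
    · rw [PanAux.Psi_eq_ringHom a r hx, map_one]
  · intro p x hx
    obtain ⟨D, hD, hval⟩ := PanAux.PsiD hx p
    rw [hD.deriv]
    exact hval.symm
end
end
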